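/- Every maximal nested collection 𝒮 with support S can be obtained from the empty collection by a sequence of activations: there is an ordering (s_1,…,s_k) of the elements of S such that, setting 𝒮_0 = ∅ and 𝒮_{r+1} = μ_{s_{r+1}}(𝒮_r) for 0 ≤ r < k, one has 𝒮_k = 𝒮. -/

import Mathlib

open MvPolynomial

/-- Reachability inside a subset `U` of vertices, along edges of `E`. -/
def ReachIn {n : ℕ} (E : Fin n → Fin n → Prop) (U : Finset (Fin n)) (a b : Fin n) : Prop :=
  Relation.ReflTransGen (fun x y => E x y ∧ x ∈ U ∧ y ∈ U) a b

/-- A nonempty subset `I` is strongly connected if any vertex of `I` can reach any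
other vertex of `I` by a directed path staying inside `I`. -/
def StronglyConnected {n : ℕ} (E : Fin n → Fin n → Prop) (I : Finset (Fin n)) : Prop :=
  I.Nonempty ∧ ∀ a ∈ I, ∀ b ∈ I, ReachIn E I a b

open Classical in
/-- The strongly connected component of `x` in the induced subgraph on `U`. -/
noncomputable def scc {n : ℕ} (E : Fin n → Fin n → Prop) (U : Finset (Fin n)) (x : Fin n) :
    Finset (Fin n) :=
  U.filter fun y => ReachIn E U x y ∧ ReachIn E U y x

/-- `S ⊕ j` : the strongly connected component of `S ∪ {j}` containing `j`. -/
noncomputable def oplus {n : ℕ} (E : Fin n → Fin n → Prop) (S : Finset (Fin n)) (j : Fin n) :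
    Finset (Fin n) :=
  scc E (insert j S) j

/-- `S ⊖ j = (S ∪ {j}) − (S ⊕ j)`. -/
noncomputable def ominus {n : ℕ} (E : Fin n → Fin n → Prop) (S : Finset (Fin n)) (j : Fin n) :
    Finset (Fin n) :=
  insert j S \ oplus E S j

/-- A family of strongly connected subsets is nested if any two members are nested or
disjoint, and any tuple of pairwise disjoint members are exactly the strongly connected
components of their union. -/
def Nested {n : ℕ} (E : Fin n → Fin n → Prop) (𝒮 : Finset (Finset (Fin n))) : Prop :=
  (∀ I ∈ 𝒮, StronglyConnected E I) ∧
  (∀ I ∈ 𝒮, ∀ J ∈ 𝒮, I ⊆ J ∨ J ⊆ I ∨ Disjoint I J) ∧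
  (∀ 𝒯 ⊆ 𝒮, (∀ I ∈ 𝒯, ∀ J ∈ 𝒯, I ≠ J → Disjoint I J) →
    ∀ I ∈ 𝒯, ∀ x ∈ I, scc E (𝒯.sup id) x = I)

/-- The support of a collection: the union of its members. -/
def nsupport {n : ℕ} (𝒮 : Finset (Finset (Fin n))) : Finset (Fin n) := 𝒮.sup id

/-- A nested collection is maximal (for its support) if the only nested collection with the
same support containing it is itself. -/
def MaximalNested {n : ℕ} (E : Fin n → Fin n → Prop) (𝒮 : Finset (Finset (Fin n))) : Prop :=
  Nested E 𝒮 ∧ ∀ 𝒮' : Finset (Finset (Fin n)),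
    Nested E 𝒮' → nsupport 𝒮' = nsupport 𝒮 → 𝒮 ⊆ 𝒮' → 𝒮' = 𝒮

/-- Activation of the collection `𝒮` at a vertex `s`: add `(support 𝒮) ⊕ s` to `𝒮`. -/
noncomputable def activate {n : ℕ} (E : Fin n → Fin n → Prop)
    (𝒮 : Finset (Finset (Fin n))) (s : Fin n) : Finset (Finset (Fin n)) :=
  insert (oplus E (nsupport 𝒮) s) 𝒮

/-
Induction on the collection. A maximal member `C` of a nested collection `𝒮` is the strongly
connected component of the support `S` at each of its vertices, so `S ⊕ s = C` for `s ∈ C`.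
The members of `𝒮` strictly inside `C` do not cover `C`: they would then be the strongly
connected components of `C`, which is itself strongly connected. If `𝒮` is maximal, exactly one
vertex `s` of `C` is left uncovered: for a second one `t`, the component of `C ∖ {t}` containing
`s` could be added to `𝒮`. Then `𝒮 ∖ {C}` is a maximal nested collection with support `S ∖ {s}`,
and activating it at `s` gives back `𝒮`.
-/

variable {n : ℕ} {E : Fin n → Fin n → Prop}

namespace ReachIn

variable {U V : Finset (Fin n)} {a b : Fin n}

theorem mono (h : U ⊆ V) (hr : ReachIn E U a b) : ReachIn E V a b :=
  Relation.ReflTransGen.mono (fun _ _ hxy => ⟨hxy.1, h hxy.2.1, h hxy.2.2⟩) _ _ hr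

theorem mem_of_mem (hr : ReachIn E U a b) (ha : a ∈ U) : b ∈ U := by
  induction hr with
  | refl => exact ha
  | tail _ hstep _ => exact hstep.2.2

end ReachIn

section StronglyConnectedComponent

variable {U V W I D : Finset (Fin n)} {x y z : Fin n}

theorem mem_scc : y ∈ scc E U x ↔ y ∈ U ∧ ReachIn E U x y ∧ ReachIn E U y x := by
  classical
  rw [scc, Finset.mem_filter]

theorem scc_subset : scc E U x ⊆ U := fun _ hy => (mem_scc.mp hy).1

theorem mem_scc_self (hx : x ∈ U) : x ∈ scc E U x :=
  mem_scc.mpr ⟨hx, .refl, .refl⟩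

theorem scc_mono (h : U ⊆ V) : scc E U x ⊆ scc E V x := fun _ hy =>
  have hy := mem_scc.mp hy
  mem_scc.mpr ⟨h hy.1, hy.2.1.mono h, hy.2.2.mono h⟩

theorem scc_eq_of_mem (hz : z ∈ scc E V y) : scc E V z = scc E V y := by
  rw [mem_scc] at hz
  ext w
  rw [mem_scc, mem_scc]
  exact ⟨fun h => ⟨h.1, hz.2.1.trans h.2.1, h.2.2.trans hz.2.2⟩,
    fun h => ⟨h.1, hz.2.2.trans h.2.1, h.2.2.trans hz.2.1⟩⟩

/-- Every vertex of a walk from `y` to `z` lies on a closed walk through `y`, hence in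
`scc E V y`. -/
theorem ReachIn.of_scc_subset (hy : y ∈ V) (hW : scc E V y ⊆ W) (hyz : ReachIn E V y z) :
    ReachIn E V z y → ReachIn E W y z := by
  induction hyz with
  | refl => exact fun _ => .refl
  | @tail b c hyb hbc ih =>
    intro hcy
    have hby : ReachIn E V b y := Relation.ReflTransGen.head hbc hcy
    refine (ih hby).tail ⟨hbc.1, hW (mem_scc.mpr ⟨ReachIn.mem_of_mem hyb hy, hyb, hby⟩), hW ?_⟩
    exact mem_scc.mpr ⟨hbc.2.2, hyb.tail hbc, hcy⟩

theorem scc_subset_scc_of_subset (hx : x ∈ V) (h : scc E V x ⊆ W) :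
    scc E V x ⊆ scc E W x := by
  intro z hz
  have hz' := mem_scc.mp hz
  refine mem_scc.mpr ⟨h hz, .of_scc_subset hx h hz'.2.1 hz'.2.2, ?_⟩
  exact .of_scc_subset hz'.1 (scc_eq_of_mem hz ▸ h) hz'.2.2 hz'.2.1

theorem stronglyConnected_scc (hx : x ∈ V) : StronglyConnected E (scc E V x) := by
  refine ⟨⟨x, mem_scc_self hx⟩, fun a ha b hb => ?_⟩
  have ha' := mem_scc.mp ha
  have hb' := mem_scc.mp hb
  exact .of_scc_subset ha'.1 (scc_eq_of_mem ha).subset (ha'.2.2.trans hb'.2.1)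
    (hb'.2.2.trans ha'.2.1)

theorem StronglyConnected.subset_scc (hI : StronglyConnected E I) (hIV : I ⊆ V) (hx : x ∈ I) :
    I ⊆ scc E V x := fun w hw =>
  mem_scc.mpr ⟨hIV hw, (hI.2 x hx w hw).mono hIV, (hI.2 w hw x hx).mono hIV⟩

theorem StronglyConnected.scc_eq (hI : StronglyConnected E I) (hx : x ∈ I) : scc E I x = I :=
  scc_subset.antisymm (hI.subset_scc subset_rfl hx)

theorem StronglyConnected.subset_scc_or_disjoint (hI : StronglyConnected E I) (hIV : I ⊆ V) :
    I ⊆ scc E V y ∨ Disjoint (scc E V y) I := by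
  refine (Finset.disjoint_or_nonempty_inter (scc E V y) I).symm.imp (fun ⟨z, hz⟩ => ?_) id
  rw [Finset.mem_inter] at hz
  exact scc_eq_of_mem hz.1 ▸ hI.subset_scc hIV hz.2

theorem scc_union_subset_scc (hD : ∀ d ∈ D, scc E (D ∪ U) d = D) (hx : x ∈ U) (hxD : x ∉ D) :
    scc E (D ∪ U) x ⊆ scc E U x := by
  refine scc_subset_scc_of_subset (Finset.mem_union_right D hx) fun y hy => ?_
  refine (Finset.mem_union.mp (scc_subset hy)).resolve_left fun hyD => hxD ?_
  exact hD y hyD ▸ scc_eq_of_mem hy ▸ mem_scc_self (Finset.mem_union_right D hx)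

end StronglyConnectedComponent

section NestedCollection

variable {𝒮 𝒯 𝒩 : Finset (Finset (Fin n))} {C D I X : Finset (Fin n)} {s t x : Fin n}

theorem mem_nsupport : x ∈ nsupport 𝒮 ↔ ∃ I ∈ 𝒮, x ∈ I := by
  simp [nsupport, Finset.mem_sup]

theorem subset_nsupport (hI : I ∈ 𝒮) : I ⊆ nsupport 𝒮 :=
  fun _ hx => mem_nsupport.mpr ⟨I, hI, hx⟩

theorem nsupport_mono (h : 𝒮 ⊆ 𝒯) : nsupport 𝒮 ⊆ nsupport 𝒯 :=
  Finset.sup_mono h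

theorem nsupport_insert : nsupport (insert D 𝒮) = D ∪ nsupport 𝒮 := by
  classical
  exact Finset.sup_insert

theorem Nested.mono (hN : Nested E 𝒯) (h : 𝒮 ⊆ 𝒯) : Nested E 𝒮 :=
  ⟨fun I hI => hN.1 I (h hI), fun I hI J hJ => hN.2.1 I (h hI) J (h hJ),
    fun 𝒰 h𝒰 => hN.2.2 𝒰 (h𝒰.trans h)⟩

theorem Nested.scc_nsupport_of_maximal (hN : Nested E 𝒮) (h𝒩 : 𝒩 ⊆ 𝒮)
    (hC : Maximal (· ∈ 𝒩) C) (hx : x ∈ C) : scc E (nsupport 𝒩) x = C := by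
  classical
  set 𝒯 := 𝒩.filter (Maximal (· ∈ 𝒩))
  have hsupp : nsupport 𝒯 = nsupport 𝒩 := by
    refine (nsupport_mono (Finset.filter_subset _ _)).antisymm fun y hy => ?_
    obtain ⟨I, hI, hyI⟩ := mem_nsupport.mp hy
    obtain ⟨M, hIM, hM⟩ := 𝒩.exists_le_maximal hI
    exact mem_nsupport.mpr ⟨M, Finset.mem_filter.mpr ⟨hM.1, hM⟩, hIM hyI⟩
  have hdisj : ∀ I ∈ 𝒯, ∀ J ∈ 𝒯, I ≠ J → Disjoint I J := by
    intro I hI J hJ hne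
    rw [Finset.mem_filter] at hI hJ
    rcases hN.2.1 I (h𝒩 hI.1) J (h𝒩 hJ.1) with h | h | h
    · exact absurd (hI.2.eq_of_le hJ.1 h) hne
    · exact absurd (hJ.2.eq_of_ge hI.1 h) hne
    · exact h
  rw [← hsupp]
  exact hN.2.2 𝒯 ((Finset.filter_subset _ _).trans h𝒩) hdisj C
    (Finset.mem_filter.mpr ⟨hC.1, hC⟩) x hx

def ownVertices (𝒮 : Finset (Finset (Fin n))) (C : Finset (Fin n)) : Finset (Fin n) :=
  C \ nsupport (𝒮.filter (· ⊂ C))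

theorem mem_ownVertices : s ∈ ownVertices 𝒮 C ↔ s ∈ C ∧ s ∉ nsupport (𝒮.filter (· ⊂ C)) :=
  Finset.mem_sdiff

theorem ownVertices_subset : ownVertices 𝒮 C ⊆ C :=
  Finset.sdiff_subset

theorem Nested.ownVertices_nonempty (hN : Nested E 𝒮) (hC : C ∈ 𝒮) :
    (ownVertices 𝒮 C).Nonempty := by
  set 𝒩 := 𝒮.filter (· ⊂ C)
  rw [ownVertices, Finset.sdiff_nonempty]
  intro hcover
  have hsupp : nsupport 𝒩 = C := by
    refine Finset.Subset.antisymm (fun y hy => ?_) hcover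
    obtain ⟨I, hI, hyI⟩ := mem_nsupport.mp hy
    exact (Finset.mem_filter.mp hI).2.subset hyI
  obtain ⟨x, hx⟩ := (hN.1 C hC).1
  obtain ⟨I, hI, hxI⟩ := mem_nsupport.mp (hcover hx)
  obtain ⟨K, hIK, hK⟩ := 𝒩.exists_le_maximal hI
  have hKC : scc E C x = K := hsupp ▸ hN.scc_nsupport_of_maximal (Finset.filter_subset _ _) hK
    (hIK hxI)
  rw [(hN.1 C hC).scc_eq hx] at hKC
  exact (Finset.mem_filter.mp hK.1).2.ne hKC.symm

theorem Nested.subset_of_mem_ownVertices (hN : Nested E 𝒮) (hC : C ∈ 𝒮)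
    (hs : s ∈ ownVertices 𝒮 C) (hX : X ∈ 𝒮) (hsX : s ∈ X) : C ⊆ X := by
  rw [mem_ownVertices] at hs
  rcases hN.2.1 X hX C hC with h | h | h
  · obtain rfl | hne := eq_or_ne X C
    · exact subset_rfl
    · exact absurd (subset_nsupport (Finset.mem_filter.mpr ⟨hX, h.ssubset_of_ne hne⟩) hsX) hs.2
  · exact h
  · exact absurd hsX (Finset.disjoint_right.mp h hs.1)

theorem Nested.insert (hN : Nested E 𝒮) (hD : StronglyConnected E D)
    (hlam : ∀ X ∈ 𝒮, D ⊆ X ∨ X ⊆ D ∨ Disjoint D X)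
    (hscc : ∀ 𝒯 ⊆ 𝒮, (∀ I ∈ 𝒯, ∀ J ∈ 𝒯, I ≠ J → Disjoint I J) → (∀ I ∈ 𝒯, Disjoint D I) →
      ∀ d ∈ D, scc E (D ∪ nsupport 𝒯) d ⊆ D) :
    Nested E (insert D 𝒮) := by
  classical
  refine ⟨?_, ?_, ?_⟩
  · intro I hI
    rcases Finset.mem_insert.mp hI with rfl | hI
    exacts [hD, hN.1 I hI]
  · intro I hI J hJ
    rw [Finset.mem_insert] at hI hJ
    rcases hI with rfl | hI <;> rcases hJ with rfl | hJ
    · exact Or.inl subset_rfl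
    · exact hlam J hJ
    · rcases hlam I hI with h | h | h
      exacts [Or.inr (Or.inl h), Or.inl h, Or.inr (Or.inr h.symm)]
    · exact hN.2.1 I hI J hJ
  intro 𝒯 h𝒯 hdisj I hI x hx
  by_cases hD𝒯 : D ∈ 𝒯
  case neg => exact hN.2.2 𝒯 ((Finset.subset_insert_iff_of_notMem hD𝒯).mp h𝒯) hdisj I hI x hx
  set 𝒯₀ := 𝒯.erase D
  have h𝒯₀ : 𝒯₀ ⊆ 𝒮 := Finset.subset_insert_iff.mp h𝒯
  have hdisj₀ : ∀ I ∈ 𝒯₀, ∀ J ∈ 𝒯₀, I ≠ J → Disjoint I J := fun I hI J hJ =>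
    hdisj I (Finset.mem_of_mem_erase hI) J (Finset.mem_of_mem_erase hJ)
  have hD𝒯₀ : ∀ I ∈ 𝒯₀, Disjoint D I := fun I hI =>
    hdisj D hD𝒯 I (Finset.mem_of_mem_erase hI) (Finset.ne_of_mem_erase hI).symm
  have hsplit : 𝒯.sup id = D ∪ nsupport 𝒯₀ := by
    rw [← nsupport_insert, Finset.insert_erase hD𝒯]
    rfl
  rw [hsplit]
  have hsccD : ∀ d ∈ D, scc E (D ∪ nsupport 𝒯₀) d = D := fun d hd =>
    (hscc 𝒯₀ h𝒯₀ hdisj₀ hD𝒯₀ d hd).antisymm (hD.subset_scc Finset.subset_union_left hd)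
  obtain rfl | hID := eq_or_ne I D
  · exact hsccD x hx
  have hI₀ : I ∈ 𝒯₀ := Finset.mem_erase.mpr ⟨hID, hI⟩
  have hIV : I ⊆ D ∪ nsupport 𝒯₀ := (subset_nsupport hI₀).trans Finset.subset_union_right
  have hxD : x ∉ D := Finset.disjoint_right.mp (hD𝒯₀ I hI₀) hx
  refine (hN.2.2 𝒯₀ h𝒯₀ hdisj₀ I hI₀ x hx ▸ scc_union_subset_scc hsccD (subset_nsupport hI₀ hx)
    hxD).antisymm ((hN.1 I (h𝒯₀ hI₀)).subset_scc hIV hx)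

end NestedCollection

namespace MaximalNested

variable {𝒮 : Finset (Finset (Fin n))} {C D : Finset (Fin n)} {s t : Fin n}

theorem mem_of_nested_insert (hM : MaximalNested E 𝒮) (hD : Nested E (insert D 𝒮))
    (hDS : D ⊆ nsupport 𝒮) : D ∈ 𝒮 :=
  hM.2 _ hD (by rw [nsupport_insert, Finset.union_eq_right.mpr hDS]) (Finset.subset_insert _ _)
    ▸ Finset.mem_insert_self D 𝒮

theorem ownVertices_subsingleton (hM : MaximalNested E 𝒮) (hC : Maximal (· ∈ 𝒮) C)
    (hs : s ∈ ownVertices 𝒮 C) (ht : t ∈ ownVertices 𝒮 C) :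
    s = t := by
  by_contra hst
  have hN := hM.1
  set W := C.erase t
  set D := scc E W s
  have hsC := ownVertices_subset hs
  have hsD : s ∈ D := mem_scc_self (Finset.mem_erase.mpr ⟨hst, hsC⟩)
  have hDC : D ⊆ C := scc_subset.trans (Finset.erase_subset t C)
  have htD : t ∉ D := fun h => Finset.notMem_erase t C (scc_subset h)
  have hDsupp : D ⊆ nsupport 𝒮 := hDC.trans (subset_nsupport hC.1)
  refine htD (hN.subset_of_mem_ownVertices hC.1 hs
    (hM.mem_of_nested_insert (hN.insert (stronglyConnected_scc (mem_scc.mp hsD).1) ?_ ?_) hDsupp)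
    hsD (ownVertices_subset ht))
  · intro X hX
    rcases hN.2.1 X hX C hC.1 with h | h | h
    · obtain rfl | hne := eq_or_ne X C
      · exact Or.inl hDC
      -- members strictly inside `C` avoid `t`, so they lie in `W`
      have hXW : X ⊆ W := fun y hy => Finset.mem_erase.mpr
        ⟨fun hyt => (mem_ownVertices.mp ht).2
          (subset_nsupport (Finset.mem_filter.mpr ⟨hX, h.ssubset_of_ne hne⟩) (hyt ▸ hy)), h hy⟩
      exact Or.inr ((hN.1 X hX).subset_scc_or_disjoint hXW)
    · exact Or.inl (hDC.trans h)
    · exact Or.inr (Or.inr (h.symm.mono_left hDC))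
  · intro 𝒯 h𝒯 _ hD𝒯 d hd
    set V := D ∪ nsupport 𝒯
    have htV : t ∉ V := by
      rw [Finset.mem_union, mem_nsupport]
      rintro (h | ⟨Y, hY, htY⟩)
      · exact htD h
      · exact Finset.disjoint_left.mp (hD𝒯 Y hY) hsD
          (hN.subset_of_mem_ownVertices hC.1 ht (h𝒯 hY) htY hsC)
    have hVS : V ⊆ nsupport 𝒮 := Finset.union_subset hDsupp (nsupport_mono h𝒯)
    have hsccC : scc E V d ⊆ C :=
      hN.scc_nsupport_of_maximal subset_rfl hC (hDC hd) ▸ scc_mono hVS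
    have hsccW : scc E V d ⊆ W := fun y hy =>
      Finset.mem_erase.mpr ⟨fun hyt => htV (hyt ▸ scc_subset hy), hsccC hy⟩
    exact scc_eq_of_mem hd ▸ scc_subset_scc_of_subset (Finset.mem_union_left _ hd) hsccW

theorem exists_ownVertices_eq_singleton (hM : MaximalNested E 𝒮)
    (hC : Maximal (· ∈ 𝒮) C) : ∃ s, ownVertices 𝒮 C = {s} := by
  obtain ⟨s, hs⟩ := hM.1.ownVertices_nonempty hC.1
  exact ⟨s, Finset.eq_singleton_iff_unique_mem.mpr
    ⟨hs, fun t ht => (hM.ownVertices_subsingleton hC hs ht).symm⟩⟩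

end MaximalNested

section Erase

variable {𝒮 : Finset (Finset (Fin n))} {C : Finset (Fin n)} {s : Fin n}

theorem Nested.nsupport_erase_of_maximal (hN : Nested E 𝒮) (hC : Maximal (· ∈ 𝒮) C)
    (hs : ownVertices 𝒮 C = {s}) :
    nsupport (𝒮.erase C) = (nsupport 𝒮).erase s := by
  have hs' : s ∈ ownVertices 𝒮 C := hs ▸ Finset.mem_singleton_self s
  ext y
  simp only [mem_nsupport, Finset.mem_erase]
  constructor
  · rintro ⟨Y, ⟨hYC, hY⟩, hyY⟩
    refine ⟨?_, Y, hY, hyY⟩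
    rintro rfl
    exact hYC (hC.eq_of_ge hY (hN.subset_of_mem_ownVertices hC.1 hs' hY hyY))
  · rintro ⟨hys, Y, hY, hyY⟩
    obtain rfl | hYC := eq_or_ne Y C
    · have hyP : y ∈ nsupport (𝒮.filter (· ⊂ Y)) := by
        by_contra hyP
        exact hys (Finset.mem_singleton.mp (hs ▸ mem_ownVertices.mpr ⟨hyY, hyP⟩))
      obtain ⟨X, hX, hyX⟩ := mem_nsupport.mp hyP
      rw [Finset.mem_filter] at hX
      exact ⟨X, ⟨hX.2.ne, hX.1⟩, hyX⟩
    · exact ⟨Y, ⟨hYC, hY⟩, hyY⟩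

/-- A nested collection `𝒮'` strictly containing `𝒮.erase C` with the same support would give
the nested collection `insert C 𝒮'` strictly containing `𝒮`. -/
theorem MaximalNested.erase (hM : MaximalNested E 𝒮) (hC : Maximal (· ∈ 𝒮) C)
    (hs : ownVertices 𝒮 C = {s}) : MaximalNested E (𝒮.erase C) := by
  have hN := hM.1
  have hsC : s ∈ C := ownVertices_subset (hs ▸ Finset.mem_singleton_self s)
  have hCS : scc E (nsupport 𝒮) s = C := hN.scc_nsupport_of_maximal subset_rfl hC hsC
  refine ⟨hN.mono (Finset.erase_subset C 𝒮), fun 𝒮' hN' hsupp hsub => ?_⟩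
  rw [hN.nsupport_erase_of_maximal hC hs] at hsupp
  have hS' : nsupport 𝒮' ⊆ nsupport 𝒮 := hsupp ▸ Finset.erase_subset s _
  have hC𝒮' : C ∉ 𝒮' := fun h => Finset.notMem_erase s _ (hsupp ▸ subset_nsupport h hsC)
  have hNC : Nested E (insert C 𝒮') := by
    refine hN'.insert (hN.1 C hC.1) (fun X hX => Or.inr ?_) fun 𝒯 h𝒯 _ _ d hd => ?_
    · exact hCS ▸ (hN'.1 X hX).subset_scc_or_disjoint ((subset_nsupport hX).trans hS')
    · have hV : C ∪ nsupport 𝒯 ⊆ nsupport 𝒮 :=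
        Finset.union_subset (subset_nsupport hC.1) ((nsupport_mono h𝒯).trans hS')
      exact (scc_mono hV).trans (hN.scc_nsupport_of_maximal subset_rfl hC hd).subset
  have hinsert : insert C 𝒮' = 𝒮 := by
    refine hM.2 _ hNC ?_ ?_
    · rw [nsupport_insert, hsupp, Finset.union_erase_of_mem hsC,
        Finset.union_eq_right.mpr (subset_nsupport hC.1)]
    · exact Finset.insert_erase hC.1 ▸ Finset.insert_subset_insert C hsub
  rw [← hinsert, Finset.erase_insert hC𝒮']

end Erase

theorem Nested.activate_erase_of_maximal {𝒮 : Finset (Finset (Fin n))} {C : Finset (Fin n)}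
    {s : Fin n} (hN : Nested E 𝒮) (hC : Maximal (· ∈ 𝒮) C) (hsC : s ∈ C)
    (hsupp : nsupport (𝒮.erase C) = (nsupport 𝒮).erase s) :
    activate E (𝒮.erase C) s = 𝒮 := by
  rw [activate, oplus, hsupp, Finset.insert_erase (subset_nsupport hC.1 hsC),
    hN.scc_nsupport_of_maximal subset_rfl hC hsC, Finset.insert_erase hC.1]

theorem stmt2_general (n : ℕ) (E : Fin n → Fin n → Prop)
    (𝒮 : Finset (Finset (Fin n))) (h𝒮 : MaximalNested E 𝒮) :
    ∃ l : List (Fin n), l.Nodup ∧ l.toFinset = nsupport 𝒮 ∧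
      l.foldl (activate E) ∅ = 𝒮 := by
  induction 𝒮 using Finset.strongInduction with
  | H 𝒮 ih =>
  obtain rfl | h𝒮ne := 𝒮.eq_empty_or_nonempty
  · exact ⟨[], List.nodup_nil, rfl, rfl⟩
  obtain ⟨C, hC⟩ := Finset.exists_maximal h𝒮ne
  obtain ⟨s, hs⟩ := h𝒮.exists_ownVertices_eq_singleton hC
  have hsC : s ∈ C := ownVertices_subset (hs ▸ Finset.mem_singleton_self s)
  have hsupp := h𝒮.1.nsupport_erase_of_maximal hC hs
  obtain ⟨l, hl, hlS, hfold⟩ := ih _ (Finset.erase_ssubset hC.1) (h𝒮.erase hC hs)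
  have hsl : s ∉ l := fun h => Finset.notMem_erase s _ (hsupp ▸ hlS ▸ List.mem_toFinset.mpr h)
  refine ⟨l ++ [s], List.concat_eq_append ▸ hl.concat hsl, ?_, ?_⟩
  · rw [List.toFinset_append, hlS, hsupp]
    simp [Finset.insert_erase (subset_nsupport hC.1 hsC)]
  · rw [List.foldl_concat, hfold, h𝒮.1.activate_erase_of_maximal hC hsC hsupp]

/-- Every maximal nested collection is obtained from the empty collection by activating
the elements of its support in some order. -/
theorem stmt2 (n : ℕ) (E : Fin n → Fin n → Prop) (hE : ∀ i, ¬ E i i)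
    (𝒮 : Finset (Finset (Fin n))) (h𝒮 : MaximalNested E 𝒮) :
    ∃ l : List (Fin n), l.Nodup ∧ l.toFinset = nsupport 𝒮 ∧
      l.foldl (activate E) ∅ = 𝒮 :=
  stmt2_general n E 𝒮 h𝒮
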